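/- Let x ∼ N(0, I_d), fix k ≥ 2, and for gating parameters w = (w_1, …, w_{k−1}) ∈ (ℝ^d)^{k−1} with w_k := 0 define the softmax probabilities p_i(x) := exp(⟨w_i, x⟩)/Σ_{j=1}^k exp(⟨w_j, x⟩). Then there exists λ > 0 such that for all w with ‖w_i‖₂ ≤ 1 for every i ∈ [k−1], and all (a_1, …, a_{k−1}) ∈ (ℝ^d)^{k−1} with Σ_{i=1}^{k−1} ‖a_i‖₂² = 1, E[ Σ_{i=1}^{k−1} p_i(x)(1 − p_i(x)) ⟨a_i, x⟩² − Σ_{i ≠ j, i,j ∈ [k−1]} p_i(x) p_j(x) ⟨a_i, x⟩⟨a_j, x⟩ ] ≥ λ. In particular, the negative Hessian of the population EM surrogate Q(·|w*) for the k-expert gating update is uniformly positive definite over the domain Ω = {w : ‖w_i‖₂ ≤ 1 ∀i}. -/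

import Mathlib

open MeasureTheory ProbabilityTheory Finset

noncomputable section

/-- Euclidean dot product on `Fin d → ℝ`. -/
def dot {d : ℕ} (u v : Fin d → ℝ) : ℝ := ∑ j, u j * v j

/-- Standard Gaussian measure `N(0, I_d)` on `Fin d → ℝ`. -/
def stdGaussian (d : ℕ) : Measure (Fin d → ℝ) :=
  Measure.pi fun _ => gaussianReal 0 1

/-- Softmax gating probabilities. -/
def softmax {d m : ℕ} (w : Fin m → Fin d → ℝ) (i : Fin m) (x : Fin d → ℝ) : ℝ :=
  Real.exp (dot (w i) x) / ∑ j, Real.exp (dot (w j) x)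

/-- Softmax probability of expert `i ∈ [k]` (`k = m+1`) for gating parameters
`w₁,…,w_m` with `w_k := 0`. -/
def softmaxP {d m : ℕ} (w : Fin m → Fin d → ℝ) (i : Fin (m + 1)) (x : Fin d → ℝ) : ℝ :=
  softmax (Fin.snoc w 0) i x

/-!
Write `S(x) = ∑ⱼ |xⱼ|`. Since `‖wᵢ‖₂ ≤ 1` gives `|⟨wᵢ, x⟩| ≤ S(x)`, every softmax probability,
including that of the expert with `w_k = 0`, is at least `ε(x) = e^{-2S(x)}/k`. The quadratic form
is the variance `∑ pᵢ tᵢ² - (∑ pᵢ tᵢ)²` of `tᵢ = ⟨aᵢ, x⟩` (with `t_k = 0`) under the weights `p`,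
and Cauchy–Schwarz bounds it below by `ε(x)² ∑ tᵢ²`. The weight `ε(x)² = k⁻² ∏ⱼ e^{-4|xⱼ|}` is a
product over the coordinates, so its Gaussian expectation against `⟨aᵢ, x⟩²` factorises: the cross
terms vanish by symmetry and what is left is `c C^{d-1} ∑ ‖aᵢ‖² / k²` with the positive constants
`C = E e^{-4|t|}` and `c = E t² e^{-4|t|}`.
-/

section NegHessianForm

variable {ι : Type*} [Fintype ι] [DecidableEq ι]

/-- The quadratic form `a_xᵀ M_x a_x`, with `q i = p_i(x)` and `t i = ⟨a_i, x⟩` for `i < k`. -/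
def negHessianForm (q t : ι → ℝ) : ℝ :=
  (∑ i, q i * (1 - q i) * t i ^ 2) - ∑ i, ∑ j ∈ univ.erase i, q i * q j * (t i * t j)

theorem negHessianForm_eq (q t : ι → ℝ) :
    negHessianForm q t = ∑ i, q i * t i ^ 2 - (∑ i, q i * t i) ^ 2 := by
  have hsq : (∑ i, q i * t i) ^ 2
      = ∑ i, (q i * t i) ^ 2 + ∑ i, ∑ j ∈ univ.erase i, q i * q j * (t i * t j) := by
    rw [sq, sum_mul_sum, ← sum_add_distrib]
    refine sum_congr rfl fun i _ => ?_
    rw [← add_sum_erase _ _ (mem_univ i)]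
    congr 1
    · ring
    · exact sum_congr rfl fun j _ => by ring
  have hdiag : ∑ i, q i * (1 - q i) * t i ^ 2 = ∑ i, q i * t i ^ 2 - ∑ i, (q i * t i) ^ 2 := by
    rw [← sum_sub_distrib]
    exact sum_congr rfl fun i _ => by ring
  rw [negHessianForm, hsq, hdiag]
  ring

theorem mul_sum_le_negHessianForm {q : ι → ℝ} {ε : ℝ} (hε : 0 ≤ ε) (hq : ∀ i, ε ≤ q i)
    (hsum : ∑ i, q i ≤ 1 - ε) (t : ι → ℝ) :
    ε * ∑ i, q i * t i ^ 2 ≤ negHessianForm q t := by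
  have hq0 : ∀ i, 0 ≤ q i := fun i => hε.trans (hq i)
  have hweighted : 0 ≤ ∑ i, q i * t i ^ 2 := sum_nonneg fun i _ => mul_nonneg (hq0 i) (sq_nonneg _)
  have cauchySchwarz : (∑ i, q i * t i) ^ 2 ≤ (∑ i, q i) * ∑ i, q i * t i ^ 2 :=
    sum_sq_le_sum_mul_sum_of_sq_le_mul _ (fun i _ => hq0 i)
      (fun i _ => mul_nonneg (hq0 i) (sq_nonneg _)) fun i _ => le_of_eq (by ring)
  rw [negHessianForm_eq]
  nlinarith

theorem sq_mul_sum_sq_le_negHessianForm {q : ι → ℝ} {ε : ℝ} (hε : 0 ≤ ε) (hq : ∀ i, ε ≤ q i)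
    (hsum : ∑ i, q i ≤ 1 - ε) (t : ι → ℝ) :
    ε ^ 2 * ∑ i, t i ^ 2 ≤ negHessianForm q t :=
  calc ε ^ 2 * ∑ i, t i ^ 2 = ε * ∑ i, ε * t i ^ 2 := by rw [← mul_sum]; ring
    _ ≤ ε * ∑ i, q i * t i ^ 2 := by gcongr with i; exact hq i
    _ ≤ negHessianForm q t := mul_sum_le_negHessianForm hε hq hsum t

theorem negHessianForm_nonneg {q : ι → ℝ} (hq : ∀ i, 0 ≤ q i) (hsum : ∑ i, q i ≤ 1)
    (t : ι → ℝ) : 0 ≤ negHessianForm q t := by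
  simpa using mul_sum_le_negHessianForm le_rfl hq (by simpa using hsum) t

theorem negHessianForm_le_sum_sq {q : ι → ℝ} (hq1 : ∀ i, q i ≤ 1)
    (t : ι → ℝ) : negHessianForm q t ≤ ∑ i, t i ^ 2 := by
  rw [negHessianForm_eq]
  calc _ ≤ ∑ i, q i * t i ^ 2 := sub_le_self _ (sq_nonneg _)
    _ ≤ ∑ i, t i ^ 2 := sum_le_sum fun i _ => mul_le_of_le_one_left (sq_nonneg _) (hq1 i)

end NegHessianForm

section Softmax

variable {d m : ℕ}

theorem abs_dot_le_sum_abs {u : Fin d → ℝ} (hu : ∑ j, u j ^ 2 ≤ 1) (x : Fin d → ℝ) :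
    |dot u x| ≤ ∑ j, |x j| := by
  refine (abs_sum_le_sum_abs _ _).trans (sum_le_sum fun j _ => ?_)
  have huj : |u j| ≤ 1 := (sq_le_one_iff_abs_le_one _).mp <|
    (single_le_sum (fun i _ => sq_nonneg (u i)) (mem_univ j)).trans hu
  rw [abs_mul]
  exact mul_le_of_le_one_left (abs_nonneg _) huj

theorem softmax_nonneg (v : Fin m → Fin d → ℝ) (i : Fin m) (x : Fin d → ℝ) :
    0 ≤ softmax v i x := by
  unfold softmax; positivity

theorem sum_softmax [NeZero m] (v : Fin m → Fin d → ℝ) (x : Fin d → ℝ) :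
    ∑ i, softmax v i x = 1 := by
  have hpos : 0 < ∑ j, Real.exp (dot (v j) x) :=
    sum_pos (fun j _ => Real.exp_pos _) univ_nonempty
  simp only [softmax, ← sum_div]
  exact div_self hpos.ne'

theorem softmax_le_one (v : Fin m → Fin d → ℝ) (i : Fin m) (x : Fin d → ℝ) :
    softmax v i x ≤ 1 := by
  have : NeZero m := ⟨i.pos.ne'⟩
  rw [← sum_softmax v x]
  exact single_le_sum (fun j _ => softmax_nonneg v j x) (mem_univ i)

theorem exp_neg_two_mul_div_le_softmax {v : Fin m → Fin d → ℝ} {x : Fin d → ℝ} {S : ℝ}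
    (hv : ∀ j, |dot (v j) x| ≤ S) (i : Fin m) :
    Real.exp (-(2 * S)) / m ≤ softmax v i x := by
  have hden : ∑ j, Real.exp (dot (v j) x) ≤ m * Real.exp S := by
    simpa using sum_le_sum fun j (_ : j ∈ univ) => Real.exp_le_exp.mpr (le_of_abs_le (hv j))
  have hpos : 0 < ∑ j, Real.exp (dot (v j) x) :=
    sum_pos (fun j _ => Real.exp_pos _) ⟨i, mem_univ i⟩
  rw [softmax, div_le_div_iff₀ (by exact_mod_cast i.pos) hpos]
  calc Real.exp (-(2 * S)) * ∑ j, Real.exp (dot (v j) x)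
      ≤ Real.exp (-(2 * S)) * (m * Real.exp S) := by gcongr
    _ = Real.exp (-S) * m := by rw [mul_left_comm, ← Real.exp_add]; ring_nf
    _ ≤ Real.exp (dot (v i) x) * m := by gcongr; exact neg_le_of_abs_le (hv i)

theorem exp_neg_two_mul_div_le_softmaxP {w : Fin m → Fin d → ℝ} (hw : ∀ i, ∑ j, w i j ^ 2 ≤ 1)
    (i : Fin (m + 1)) (x : Fin d → ℝ) :
    Real.exp (-(2 * ∑ j, |x j|)) / (m + 1) ≤ softmaxP w i x := by
  have hv (j : Fin (m + 1)) :
      |dot ((Fin.snoc w 0 : Fin (m + 1) → Fin d → ℝ) j) x| ≤ ∑ j, |x j| := by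
    induction j using Fin.lastCases with
    | last => simpa [dot] using sum_nonneg fun j (_ : j ∈ univ) => abs_nonneg (x j)
    | cast j => simpa using abs_dot_le_sum_abs (hw j) x
  exact_mod_cast exp_neg_two_mul_div_le_softmax hv i

theorem sum_softmaxP_castSucc (w : Fin m → Fin d → ℝ) (x : Fin d → ℝ) :
    ∑ i : Fin m, softmaxP w i.castSucc x = 1 - softmaxP w (Fin.last m) x := by
  have h : ∑ i, softmaxP w i x = 1 := sum_softmax _ x
  rw [Fin.sum_univ_castSucc] at h
  linarith

end Softmax

def expAbsWeight (t : ℝ) : ℝ := Real.exp (-(4 * |t|))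

@[fun_prop]
theorem continuous_expAbsWeight : Continuous expAbsWeight := by
  unfold expAbsWeight; fun_prop

theorem expAbsWeight_pos (t : ℝ) : 0 < expAbsWeight t := Real.exp_pos _

theorem expAbsWeight_abs_le_one (t : ℝ) : |expAbsWeight t| ≤ 1 := by
  rw [abs_of_pos (expAbsWeight_pos t), expAbsWeight, Real.exp_le_one_iff]
  linarith [abs_nonneg t]

theorem expAbsWeight_neg (t : ℝ) : expAbsWeight (-t) = expAbsWeight t := by
  rw [expAbsWeight, abs_neg, expAbsWeight]

theorem prod_expAbsWeight {d : ℕ} (x : Fin d → ℝ) :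
    ∏ r, expAbsWeight (x r) = Real.exp (-(2 * ∑ r, |x r|)) ^ 2 := by
  simp only [expAbsWeight]
  rw [← Real.exp_sum, ← Real.exp_nat_mul, sum_neg_distrib, ← mul_sum]
  push_cast
  ring_nf

theorem prod_expAbsWeight_mul_sum_sq_div_le_negHessianForm {d m : ℕ} {w : Fin m → Fin d → ℝ}
    (hw : ∀ i, ∑ j, w i j ^ 2 ≤ 1) (a : Fin m → Fin d → ℝ) (x : Fin d → ℝ) :
    (∏ r, expAbsWeight (x r)) * (∑ i, dot (a i) x ^ 2) / (m + 1) ^ 2 ≤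
      negHessianForm (fun i : Fin m => softmaxP w i.castSucc x) (fun i => dot (a i) x) := by
  have hlower := fun i => exp_neg_two_mul_div_le_softmaxP hw i x
  have hsum :
      ∑ i : Fin m, softmaxP w i.castSucc x ≤ 1 - Real.exp (-(2 * ∑ j, |x j|)) / (m + 1) := by
    rw [sum_softmaxP_castSucc]
    linarith [hlower (Fin.last m)]
  calc (∏ r, expAbsWeight (x r)) * (∑ i, dot (a i) x ^ 2) / (m + 1) ^ 2
      = (Real.exp (-(2 * ∑ j, |x j|)) / (m + 1)) ^ 2 * ∑ i, dot (a i) x ^ 2 := by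
        rw [prod_expAbsWeight, div_pow]; ring
    _ ≤ _ := sq_mul_sum_sq_le_negHessianForm (by positivity) (fun i => hlower _) hsum _

theorem integral_eq_zero_of_odd {G : Type*} [MeasurableSpace G] [AddGroup G] [MeasurableNeg G]
    {μ : Measure G} [μ.IsNegInvariant] {f : G → ℝ} (hf : ∀ t, f (-t) = -f t) :
    ∫ t, f t ∂μ = 0 := by
  have h := integral_neg_eq_self f μ
  simp only [hf, integral_neg] at h
  linarith

section ProductMeasure

variable {d : ℕ} {μ : Measure ℝ}

theorem memLp_eval_pi [IsProbabilityMeasure μ] {p : ENNReal} (hμ : MemLp id p μ) (j : Fin d) :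
    MemLp (fun x : Fin d → ℝ => x j) p (Measure.pi fun _ => μ) :=
  hμ.comp_measurePreserving (measurePreserving_eval _ j)

theorem memLp_dot_pi [IsProbabilityMeasure μ] {p : ENNReal} (hμ : MemLp id p μ) (u : Fin d → ℝ) :
    MemLp (fun x => dot u x) p (Measure.pi fun _ => μ) :=
  memLp_finsetSum _ fun j _ => (memLp_eval_pi hμ j).const_mul (u j)

theorem integral_pi_prod_mul_eval_mul_eval [SigmaFinite μ] (φ : ℝ → ℝ) (j l : Fin d) :
    ∫ x, (∏ r, φ (x r)) * (x j * x l) ∂(Measure.pi fun _ => μ) =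
      ∏ r, ∫ t, φ t * ((if r = j then t else 1) * (if r = l then t else 1)) ∂μ := by
  rw [← integral_fintype_prod_eq_prod]
  congr 1 with x
  rw [prod_mul_distrib, prod_mul_distrib]
  simp [prod_ite_eq']

theorem integral_pi_prod_mul_eval_mul_eval_of_ne [SigmaFinite μ] [μ.IsNegInvariant] {φ : ℝ → ℝ}
    (hφ : ∀ t, φ (-t) = φ t) {j l : Fin d} (hjl : j ≠ l) :
    ∫ x, (∏ r, φ (x r)) * (x j * x l) ∂(Measure.pi fun _ => μ) = 0 := by
  rw [integral_pi_prod_mul_eval_mul_eval]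
  refine prod_eq_zero (mem_univ j) ?_
  simp only [if_neg hjl, mul_one]
  exact integral_eq_zero_of_odd fun t => by simp only [if_true, hφ]; ring

theorem integral_pi_prod_mul_eval_mul_self [SigmaFinite μ] (φ : ℝ → ℝ) (j : Fin d) :
    ∫ x, (∏ r, φ (x r)) * (x j * x j) ∂(Measure.pi fun _ => μ) =
      (∫ t, φ t * t ^ 2 ∂μ) * (∫ t, φ t ∂μ) ^ (d - 1) := by
  rw [integral_pi_prod_mul_eval_mul_eval, ← mul_prod_erase _ _ (mem_univ j)]
  congr 1
  · simp [sq]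
  · rw [prod_congr (g := fun _ => ∫ t, φ t ∂μ) rfl fun r hr => by
        simp only [if_neg (ne_of_mem_erase hr), mul_one],
      prod_const, card_erase_of_mem (mem_univ j), card_univ, Fintype.card_fin]

theorem integrable_pi_prod_mul {φ : ℝ → ℝ} (hφm : Measurable φ) (hφ1 : ∀ t, |φ t| ≤ 1)
    {f : (Fin d → ℝ) → ℝ} (hf : Integrable f (Measure.pi fun _ => μ)) :
    Integrable (fun x => (∏ r, φ (x r)) * f x) (Measure.pi fun _ => μ) :=
  hf.bdd_mul (Finset.measurable_prod _ fun r _ =>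
      hφm.comp (measurable_pi_apply r)).aestronglyMeasurable <|
    ae_of_all _ fun x => by
      rw [norm_prod]
      exact prod_le_one (fun r _ => norm_nonneg _) fun r _ => hφ1 (x r)

theorem integral_pi_prod_mul_dot_sq [IsProbabilityMeasure μ] [μ.IsNegInvariant]
    (hμ : MemLp id 2 μ) {φ : ℝ → ℝ} (hφm : Measurable φ) (hφ1 : ∀ t, |φ t| ≤ 1)
    (hφ : ∀ t, φ (-t) = φ t) (u : Fin d → ℝ) :
    ∫ x, (∏ r, φ (x r)) * dot u x ^ 2 ∂(Measure.pi fun _ => μ) =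
      (∑ j, u j ^ 2) * ((∫ t, φ t * t ^ 2 ∂μ) * (∫ t, φ t ∂μ) ^ (d - 1)) := by
  have hint (j l : Fin d) :
      Integrable (fun x => (∏ r, φ (x r)) * (x j * x l)) (Measure.pi fun _ => μ) :=
    integrable_pi_prod_mul hφm hφ1 ((memLp_eval_pi hμ j).integrable_mul (memLp_eval_pi hμ l))
  have hexpand (x : Fin d → ℝ) : (∏ r, φ (x r)) * dot u x ^ 2 =
      ∑ j, ∑ l, u j * u l * ((∏ r, φ (x r)) * (x j * x l)) := by
    rw [dot, sq, sum_mul_sum, mul_sum]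
    refine sum_congr rfl fun j _ => ?_
    rw [mul_sum]
    exact sum_congr rfl fun l _ => by ring
  simp_rw [hexpand]
  rw [integral_finsetSum _ fun j _ => integrable_finsetSum _ fun l _ => (hint j l).const_mul _,
    sum_mul]
  refine sum_congr rfl fun j _ => ?_
  rw [integral_finsetSum _ fun l _ => (hint j l).const_mul _, sum_eq_single j]
  · rw [integral_const_mul, integral_pi_prod_mul_eval_mul_self]
    ring
  · intro l _ hlj
    rw [integral_const_mul, integral_pi_prod_mul_eval_mul_eval_of_ne hφ hlj.symm, mul_zero]
  · simp

theorem integral_pi_prod_mul_sum_dot_sq {m : ℕ} [IsProbabilityMeasure μ] [μ.IsNegInvariant]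
    (hμ : MemLp id 2 μ) {φ : ℝ → ℝ} (hφm : Measurable φ) (hφ1 : ∀ t, |φ t| ≤ 1)
    (hφ : ∀ t, φ (-t) = φ t) (a : Fin m → Fin d → ℝ) :
    ∫ x, (∏ r, φ (x r)) * ∑ i, dot (a i) x ^ 2 ∂(Measure.pi fun _ => μ) =
      (∑ i, ∑ j, a i j ^ 2) * ((∫ t, φ t * t ^ 2 ∂μ) * (∫ t, φ t ∂μ) ^ (d - 1)) := by
  simp_rw [mul_sum]
  rw [integral_finsetSum _ fun i _ =>
    integrable_pi_prod_mul hφm hφ1 (memLp_dot_pi hμ (a i)).integrable_sq, sum_mul]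
  exact sum_congr rfl fun i _ => integral_pi_prod_mul_dot_sq hμ hφm hφ1 hφ (a i)

end ProductMeasure

instance (v : NNReal) : (gaussianReal 0 v).IsNegInvariant :=
  ⟨by simpa [Measure.neg_def] using gaussianReal_map_neg (μ := 0) (v := v)⟩

theorem integrable_expAbsWeight_mul_sq :
    Integrable (fun t => expAbsWeight t * t ^ 2) (gaussianReal 0 1) := by
  refine (memLp_id_gaussianReal 2).integrable_sq.mono (by fun_prop) (ae_of_all _ fun t => ?_)
  rw [norm_mul]
  exact mul_le_of_le_one_left (norm_nonneg _) (by simpa using expAbsWeight_abs_le_one t)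

theorem integral_expAbsWeight_pos : 0 < ∫ t, expAbsWeight t ∂(gaussianReal 0 1) :=
  integral_exp_pos <| Integrable.of_bound (by fun_prop) 1 <| ae_of_all _ expAbsWeight_abs_le_one

theorem integral_expAbsWeight_mul_sq_pos :
    0 < ∫ t, expAbsWeight t * t ^ 2 ∂(gaussianReal 0 1) := by
  have := nullSingletonClass_gaussianReal (μ := 0) one_ne_zero
  rw [integral_pos_iff_support_of_nonneg
    (fun t => mul_nonneg (expAbsWeight_pos t).le (sq_nonneg t)) integrable_expAbsWeight_mul_sq]
  have hsupp : Function.support (fun t => expAbsWeight t * t ^ 2) = {0}ᶜ := by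
    ext t
    simp [(expAbsWeight_pos t).ne']
  rw [hsupp, measure_compl (measurableSet_singleton 0) (measure_ne_top _ _)]
  simp

theorem integrable_negHessianForm_softmaxP {d m : ℕ} (w a : Fin m → Fin d → ℝ) :
    Integrable (fun x => negHessianForm (fun i : Fin m => softmaxP w i.castSucc x)
      (fun i => dot (a i) x)) (stdGaussian d) := by
  refine (integrable_finsetSum univ fun i _ =>
    (memLp_dot_pi (memLp_id_gaussianReal 2) (a i)).integrable_sq).mono'
    (by unfold negHessianForm softmaxP softmax dot; fun_prop) (ae_of_all _ fun x => ?_)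
  rw [Real.norm_eq_abs, abs_of_nonneg]
  · exact negHessianForm_le_sum_sq (fun i => softmax_le_one _ _ x) _
  · refine negHessianForm_nonneg (q := fun i : Fin m => softmaxP w i.castSucc x)
      (fun i => softmax_nonneg _ _ x) ?_ _
    rw [sum_softmaxP_castSucc]
    exact sub_le_self _ (softmax_nonneg _ _ x)

theorem softmax_EM_uniform_strong_concavity_general {d m : ℕ} :
    ∃ lam : ℝ, 0 < lam ∧
      ∀ w : Fin m → Fin d → ℝ, (∀ i, ∑ j, (w i j) ^ 2 ≤ 1) →
      ∀ a : Fin m → Fin d → ℝ, (∑ i, ∑ j, (a i j) ^ 2 = 1) →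
        lam ≤ ∫ x,
          ((∑ i : Fin m, softmaxP w i.castSucc x * (1 - softmaxP w i.castSucc x)
              * (dot (a i) x) ^ 2)
            - ∑ i : Fin m, ∑ j ∈ univ.erase i,
                softmaxP w i.castSucc x * softmaxP w j.castSucc x
                  * (dot (a i) x * dot (a j) x)) ∂(stdGaussian d) := by
  set C := ∫ t, expAbsWeight t ∂(gaussianReal 0 1)
  set c := ∫ t, expAbsWeight t * t ^ 2 ∂(gaussianReal 0 1)
  refine ⟨c * C ^ (d - 1) / (m + 1) ^ 2,
    div_pos (mul_pos integral_expAbsWeight_mul_sq_pos (pow_pos integral_expAbsWeight_pos _))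
      (by positivity), fun w hw a ha => ?_⟩
  have hmoment : ∫ x, (∏ r, expAbsWeight (x r)) * (∑ i, dot (a i) x ^ 2) / (m + 1) ^ 2
      ∂(stdGaussian d) = c * C ^ (d - 1) / (m + 1) ^ 2 := by
    rw [integral_div, _root_.stdGaussian, integral_pi_prod_mul_sum_dot_sq
      (memLp_id_gaussianReal 2) (by fun_prop) expAbsWeight_abs_le_one expAbsWeight_neg, ha, one_mul]
  have hweight (x : Fin d → ℝ) : 0 ≤ ∏ r, expAbsWeight (x r) :=
    prod_nonneg fun r _ => (expAbsWeight_pos _).le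
  rw [← hmoment]
  exact integral_mono_of_nonneg
    (ae_of_all _ fun x => div_nonneg (mul_nonneg (hweight x) (by positivity)) (by positivity))
    (integrable_negHessianForm_softmaxP w a)
    (ae_of_all _ fun x => prod_expAbsWeight_mul_sum_sq_div_le_negHessianForm hw a x)

/-- uniform strong concavity of the population EM surrogate for the
`k`-expert softmax gating (`k = m+1 ≥ 2`): there is `λ > 0` such that for all gating
parameters in the unit balls and all directions `a` with `Σᵢ‖aᵢ‖² = 1`, the expected
quadratic form of the negative Hessian is at least `λ`. -/
theorem softmax_EM_uniform_strong_concavity {d m : ℕ} (hm : 1 ≤ m) :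
    ∃ lam : ℝ, 0 < lam ∧
      ∀ w : Fin m → Fin d → ℝ, (∀ i, ∑ j, (w i j) ^ 2 ≤ 1) →
      ∀ a : Fin m → Fin d → ℝ, (∑ i, ∑ j, (a i j) ^ 2 = 1) →
        lam ≤ ∫ x,
          ((∑ i : Fin m, softmaxP w i.castSucc x * (1 - softmaxP w i.castSucc x)
              * (dot (a i) x) ^ 2)
            - ∑ i : Fin m, ∑ j ∈ univ.erase i,
                softmaxP w i.castSucc x * softmaxP w j.castSucc x
                  * (dot (a i) x * dot (a j) x)) ∂(stdGaussian d) :=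
  softmax_EM_uniform_strong_concavity_general

end
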